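/- arXiv:1611.06268 — 2 statements merged into one kernel-verified Lean document; each statement's English description precedes it below -/
import Mathlib

section
/- Let κ be an infinite cardinal. Every initially κ-compact topological space that admits a quasi-G_κ-diagonal sequence is compact. -/
open Set Cardinal

universe u

/-- The star of a family `𝒪` of subsets about a set `A`:
`st(A, 𝒪) = ⋃ {O ∈ 𝒪 : O ∩ A ≠ ∅}`. -/
def SetStar {X : Type u} (A : Set X) (𝒪 : Set (Set X)) : Set X :=
  ⋃₀ {O | O ∈ 𝒪 ∧ (O ∩ A).Nonempty}

/-- `X` is initially `κ`-compact: every open cover of cardinality at most `κ`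
has a finite subcover. -/
def InitiallyCompact (X : Type u) [TopologicalSpace X] (κ : Cardinal.{u}) : Prop :=
  ∀ 𝒞 : Set (Set X), (∀ U ∈ 𝒞, IsOpen U) → ⋃₀ 𝒞 = Set.univ → #𝒞 ≤ κ →
    ∃ F ⊆ 𝒞, F.Finite ∧ ⋃₀ F = Set.univ

/-- `{𝒪_α : α < κ}` is a quasi-`G_κ`-diagonal sequence for `X`: each `𝒪_α` is a
collection of open subsets of `X`, and for all distinct `x, y ∈ X` there is `α < κ`
with `x ∈ ⋃ 𝒪_α` and `y ∉ st(x, 𝒪_α)`. -/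
def IsQuasiGDiagonalSeq {X : Type u} [TopologicalSpace X] (κ : Cardinal.{u})
    (𝒪 : κ.ord.ToType → Set (Set X)) : Prop :=
  (∀ α, ∀ O ∈ 𝒪 α, IsOpen O) ∧
    ∀ x y : X, x ≠ y → ∃ α, x ∈ ⋃₀ 𝒪 α ∧ y ∉ SetStar {x} (𝒪 α)

/-! If `X` were not compact, some proper filter `f` would have no cluster point. Extend the
closed members of `f` to a maximal family `ℱ` of closed sets with the finite intersection
property, and let `𝔉` be the filter of supersets of intersections of at most `κ` members of `ℱ`.
Initial `κ`-compactness makes `𝔉` proper and `X` countably compact, and maximality of `ℱ` makes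
`𝔉` contain every closed set or its complement.

Call `x ∈ ⋃ 𝒪_α` small for `α` if `X ∖ st(x, 𝒪_α) ∈ 𝔉`. For each `α` the set of such points
has its complement in `𝔉`: otherwise one picks, inside a closed member of `𝔉` contained in
`⋃ 𝒪_α`, points `x_n` small for `α` with `x_m ∉ st(x_n, 𝒪_α)` for `n < m`, and a cluster point of
`(x_n)` lies in some `O ∈ 𝒪_α` containing two of them. Intersecting over all `α` gives a point
small for no `α`; the quasi-diagonal, tested against the points of any member of `𝔉` missing
it, shows that it lies in every member of `𝔉`, hence is a cluster point of `f`. -/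

open Filter Topology

section SetStar

variable {X : Type u} {𝒰 : Set (Set X)}

theorem mem_setStar_singleton {x y : X} :
    y ∈ SetStar {x} 𝒰 ↔ ∃ O ∈ 𝒰, x ∈ O ∧ y ∈ O := by
  simp only [SetStar, mem_sUnion, mem_ofPred_eq, inter_singleton_nonempty, and_assoc]

theorem isOpen_setStar [TopologicalSpace X] (hopen : ∀ O ∈ 𝒰, IsOpen O) (A : Set X) :
    IsOpen (SetStar A 𝒰) :=
  isOpen_sUnion fun O hO => hopen O hO.1

end SetStar

section InitiallyCompact

variable {X : Type u} [TopologicalSpace X] {κ : Cardinal.{u}}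

theorem InitiallyCompact.sInter_nonempty (hX : InitiallyCompact X κ) {f : Filter X} [f.NeBot]
    {𝒮 : Set (Set X)} (hcl : ∀ C ∈ 𝒮, IsClosed C) (hf : 𝒮 ⊆ f.sets) (hcard : #𝒮 ≤ κ) :
    (⋂₀ 𝒮).Nonempty := by
  rw [nonempty_iff_ne_empty]
  intro hempty
  obtain ⟨F, hF𝒮, hFfin, hFcov⟩ := hX (compl '' 𝒮)
    (forall_mem_image.2 fun C hC => (hcl C hC).isOpen_compl)
    (by rw [← compl_sInter, hempty, compl_empty]) (mk_image_le.trans hcard)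
  have hmem : ⋂₀ (compl '' F) ∈ f := by
    refine (sInter_mem (hFfin.image _)).2 (forall_mem_image.2 fun U hU => ?_)
    obtain ⟨C, hC, rfl⟩ := hF𝒮 hU
    simpa using hf hC
  rw [← compl_sUnion, hFcov, compl_univ] at hmem
  exact f.empty_notMem hmem

theorem InitiallyCompact.countablyCompactSpace (hX : InitiallyCompact X κ) (hκ : ℵ₀ ≤ κ) :
    CountablyCompactSpace X := by
  refine ⟨fun f _ _ _ => ?_⟩
  obtain ⟨s, hs⟩ := f.exists_antitone_basis
  obtain ⟨z, hz⟩ := hX.sInter_nonempty (f := f) (𝒮 := range (closure ∘ s))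
    (forall_mem_range.2 fun _ => isClosed_closure)
    (range_subset_iff.2 fun n => mem_of_superset (hs.mem n) subset_closure)
    ((mk_le_aleph0_iff.2 (countable_range _).to_subtype).trans hκ)
  refine ⟨z, mem_univ z, clusterPt_iff_forall_mem_closure.2 fun t ht => ?_⟩
  obtain ⟨n, -, hn⟩ := hs.1.mem_iff.1 ht
  exact closure_mono hn (hz _ (mem_range_self n))

end InitiallyCompact

section MaximalClosedFIP

variable {X : Type u} [TopologicalSpace X]

theorem exists_maximal_closed_fip {ℱ₀ : Set (Set X)} (hcl : ∀ C ∈ ℱ₀, IsClosed C)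
    (hfip : ∀ u ⊆ ℱ₀, u.Finite → (⋂₀ u).Nonempty) :
    ∃ ℱ, ℱ₀ ⊆ ℱ ∧ (∀ C ∈ ℱ, IsClosed C) ∧ (∀ u ⊆ ℱ, u.Finite → (⋂₀ u).Nonempty) ∧
      ∀ C, IsClosed C → (∀ u ⊆ ℱ, u.Finite → (C ∩ ⋂₀ u).Nonempty) → C ∈ ℱ := by
  set P := {𝒢 : Set (Set X) | (∀ C ∈ 𝒢, IsClosed C) ∧ ∀ u ⊆ 𝒢, u.Finite → (⋂₀ u).Nonempty}
  have hchain : ∀ c ⊆ P, IsChain (· ⊆ ·) c → c.Nonempty → ∃ ub ∈ P, ∀ 𝒢 ∈ c, 𝒢 ⊆ ub := by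
    refine fun c hcP hc hne => ⟨⋃₀ c, ⟨?_, fun u hu hfin => ?_⟩, fun _ => subset_sUnion_of_mem⟩
    · rintro C ⟨𝒢, h𝒢, hC⟩
      exact (hcP h𝒢).1 C hC
    · obtain ⟨𝒢, h𝒢, hu𝒢⟩ := hc.directedOn.exists_mem_subset_of_finite_of_subset_sUnion hne hfin hu
      exact (hcP h𝒢).2 u hu𝒢 hfin
  obtain ⟨ℱ, hℱ₀, hmax⟩ := zorn_subset_nonempty P hchain ℱ₀ ⟨hcl, hfip⟩
  refine ⟨ℱ, hℱ₀, hmax.prop.1, hmax.prop.2, fun C hC hmeet => hmax.mem_of_prop_insert ⟨?_, ?_⟩⟩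
  · exact forall_mem_insert.2 ⟨hC, hmax.prop.1⟩
  · intro u hu hfin
    have hsub : u \ {C} ⊆ ℱ := sdiff_singleton_subset_iff.2 hu
    refine (hmeet _ hsub (hfin.sdiff)).mono ?_
    rw [← sInter_insert]
    exact sInter_subset_sInter (subset_insert_sdiff_singleton C u)

end MaximalClosedFIP

namespace Filter

variable {X : Type u}

def kappaGenerate (κ : Cardinal.{u}) (hκ : ℵ₀ ≤ κ) (ℱ : Set (Set X)) : Filter X where
  sets := {S | ∃ 𝒲 ⊆ ℱ, #𝒲 ≤ κ ∧ ⋂₀ 𝒲 ⊆ S}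
  univ_sets := ⟨∅, empty_subset _, by simp, subset_univ _⟩
  sets_of_superset := fun ⟨𝒲, h𝒲ℱ, h𝒲κ, h𝒲S⟩ hST => ⟨𝒲, h𝒲ℱ, h𝒲κ, h𝒲S.trans hST⟩
  inter_sets := fun ⟨𝒲, h𝒲ℱ, h𝒲κ, h𝒲S⟩ ⟨𝒱, h𝒱ℱ, h𝒱κ, h𝒱T⟩ =>
    ⟨𝒲 ∪ 𝒱, union_subset h𝒲ℱ h𝒱ℱ,
      (mk_union_le 𝒲 𝒱).trans ((add_le_add h𝒲κ h𝒱κ).trans (add_eq_self hκ).le),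
      by rw [sInter_union]; exact inter_subset_inter h𝒲S h𝒱T⟩

variable {κ : Cardinal.{u}} {hκ : ℵ₀ ≤ κ} {ℱ : Set (Set X)}

theorem mem_kappaGenerate_of_mem {C : Set X} (hC : C ∈ ℱ) : C ∈ kappaGenerate κ hκ ℱ :=
  ⟨{C}, singleton_subset_iff.2 hC, mk_singleton C ▸ one_le_aleph0.trans hκ,
    (sInter_singleton C).subset⟩

theorem iInter_mem_kappaGenerate {ι : Type u} (hι : #ι ≤ κ) {S : ι → Set X}
    (hS : ∀ i, S i ∈ kappaGenerate κ hκ ℱ) : ⋂ i, S i ∈ kappaGenerate κ hκ ℱ := by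
  choose 𝒲 h𝒲ℱ h𝒲κ h𝒲S using hS
  refine ⟨⋃ i, 𝒲 i, iUnion_subset h𝒲ℱ, ?_, ?_⟩
  · calc #(⋃ i, 𝒲 i) ≤ #ι * ⨆ i, #(𝒲 i) := mk_iUnion_le _
      _ ≤ κ * κ := mul_le_mul' hι (ciSup_le' h𝒲κ)
      _ = κ := mul_eq_self hκ
  · rw [sInter_iUnion]
    exact iInter_mono h𝒲S

variable [TopologicalSpace X]

theorem kappaGenerate_neBot (hX : InitiallyCompact X κ) (hcl : ∀ C ∈ ℱ, IsClosed C)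
    (hfip : ∀ u ⊆ ℱ, u.Finite → (⋂₀ u).Nonempty) : (kappaGenerate κ hκ ℱ).NeBot := by
  have : (generate ℱ).NeBot := generate_neBot_iff.2 hfip
  refine forall_mem_nonempty_iff_neBot.1 fun S ⟨𝒲, h𝒲ℱ, h𝒲κ, h𝒲S⟩ => ?_
  exact (hX.sInter_nonempty (f := generate ℱ) (fun C hC => hcl C (h𝒲ℱ hC))
    (fun C hC => mem_generate_of_mem (h𝒲ℱ hC)) h𝒲κ).mono h𝒲S

theorem mem_or_compl_mem_kappaGenerate
    (hmax : ∀ C, IsClosed C → (∀ u ⊆ ℱ, u.Finite → (C ∩ ⋂₀ u).Nonempty) → C ∈ ℱ)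
    {C : Set X} (hC : IsClosed C) : C ∈ kappaGenerate κ hκ ℱ ∨ Cᶜ ∈ kappaGenerate κ hκ ℱ := by
  by_cases hmeet : ∀ u ⊆ ℱ, u.Finite → (C ∩ ⋂₀ u).Nonempty
  · exact Or.inl (mem_kappaGenerate_of_mem (hmax C hC hmeet))
  · push Not at hmeet
    obtain ⟨u, huℱ, hfin, hdisj⟩ := hmeet
    exact Or.inr ⟨u, huℱ, hfin.lt_aleph0.le.trans hκ,
      subset_compl_iff_disjoint_left.2 (disjoint_iff_inter_eq_empty.2 hdisj)⟩

theorem exists_isClosed_subset_of_mem_kappaGenerate (hcl : ∀ C ∈ ℱ, IsClosed C) {S : Set X}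
    (hS : S ∈ kappaGenerate κ hκ ℱ) : ∃ C ∈ kappaGenerate κ hκ ℱ, IsClosed C ∧ C ⊆ S := by
  obtain ⟨𝒲, h𝒲ℱ, h𝒲κ, h𝒲S⟩ := hS
  exact ⟨⋂₀ 𝒲, ⟨𝒲, h𝒲ℱ, h𝒲κ, subset_rfl⟩, isClosed_sInter fun C hC => hcl C (h𝒲ℱ hC), h𝒲S⟩

end Filter

theorem Filter.Frequently.exists_seq_forall_lt_mem {X : Type*} {𝔉 : Filter X} {E : Set X}
    (hE : ∃ᶠ x in 𝔉, x ∈ E) {R : X → Set X} (hR : ∀ x ∈ E, R x ∈ 𝔉) {T : Set X}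
    (hT : T ∈ 𝔉) : ∃ x : ℕ → X, (∀ n, x n ∈ E ∩ T) ∧ ∀ m n, m < n → x n ∈ R (x m) := by
  have : Nonempty X := let ⟨x, _⟩ := hE.exists; ⟨x⟩
  choose! pick hpickT hpickE using fun S (hS : S ∈ 𝔉) => frequently_iff.1 hE hS
  let Ts : ℕ → Set X := fun n => Nat.rec T (fun _ S => S ∩ R (pick S)) n
  have hTs : ∀ n, Ts n ∈ 𝔉 := fun n => by
    induction n with
    | zero => exact hT
    | succ n ih => exact inter_mem ih (hR _ (hpickE _ ih))
  have hanti : Antitone Ts := antitone_nat_of_succ_le fun n => inter_subset_left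
  refine ⟨fun n => pick (Ts n), fun n => ⟨hpickE _ (hTs n), hanti (Nat.zero_le n)
    (hpickT _ (hTs n))⟩, fun m n hmn => (hanti hmn (hpickT _ (hTs n))).2⟩

section QuasiDiagonal

variable {X : Type u} [TopologicalSpace X] {𝔉 : Filter X}

theorem compl_setOf_compl_setStar_mem [CountablyCompactSpace X] {𝒰 : Set (Set X)}
    (hopen : ∀ O ∈ 𝒰, IsOpen O) (hdecide : ∀ C, IsClosed C → C ∈ 𝔉 ∨ Cᶜ ∈ 𝔉)
    (hbase : ∀ S ∈ 𝔉, ∃ C ∈ 𝔉, IsClosed C ∧ C ⊆ S) :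
    {x | x ∈ ⋃₀ 𝒰 ∧ (SetStar {x} 𝒰)ᶜ ∈ 𝔉}ᶜ ∈ 𝔉 := by
  set E := {x | x ∈ ⋃₀ 𝒰 ∧ (SetStar {x} 𝒰)ᶜ ∈ 𝔉}
  rcases hdecide _ (isOpen_sUnion hopen).isClosed_compl with hcompl | hdom
  · exact mem_of_superset hcompl fun x hx hxE => hx hxE.1
  rw [compl_compl] at hdom
  obtain ⟨C, hC𝔉, hCcl, hCdom⟩ := hbase _ hdom
  by_contra hE
  obtain ⟨x, hxEC, hxR⟩ := (not_eventually.1 hE).mono (fun _ => not_not.1)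
    |>.exists_seq_forall_lt_mem (fun y hy => hy.2) hC𝔉
  obtain ⟨z, -, hz⟩ := CountablyCompactSpace.isCountablyCompact_univ.seq_clusterPt x
    (Eventually.of_forall fun _ => mem_univ _)
  obtain ⟨O, hO𝒰, hzO⟩ := hCdom (hCcl.mem_of_mapClusterPt hz
    (Eventually.of_forall fun n => (hxEC n).2))
  have hfreq := frequently_atTop.1 (hz.frequently ((hopen O hO𝒰).mem_nhds hzO))
  obtain ⟨m, -, hm⟩ := hfreq 0
  obtain ⟨n, hmn, hn⟩ := hfreq (m + 1)
  exact hxR m n hmn (mem_setStar_singleton.2 ⟨O, hO𝒰, hm, hn⟩)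

variable {ι : Type*} {𝒪 : ι → Set (Set X)}

theorem exists_compl_setStar_mem (hopen : ∀ i, ∀ O ∈ 𝒪 i, IsOpen O)
    (hdiag : ∀ x y : X, x ≠ y → ∃ i, x ∈ ⋃₀ 𝒪 i ∧ y ∉ SetStar {x} (𝒪 i))
    [𝔉.NeBot] (hcomplete : ∀ S : ι → Set X, (∀ i, S i ∈ 𝔉) → ⋂ i, S i ∈ 𝔉)
    (hdecide : ∀ C, IsClosed C → C ∈ 𝔉 ∨ Cᶜ ∈ 𝔉) {x : X} (hx : x ∉ 𝔉.ker) :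
    ∃ i, x ∈ ⋃₀ 𝒪 i ∧ (SetStar {x} (𝒪 i))ᶜ ∈ 𝔉 := by
  obtain ⟨S₀, hS₀, hxS₀⟩ : ∃ S₀ ∈ 𝔉, x ∉ S₀ := by simpa using hx
  by_contra! hsmall
  set S : ι → Set X := fun i => {y | x ∈ ⋃₀ 𝒪 i → y ∈ SetStar {x} (𝒪 i)}
  have hS : ∀ i, S i ∈ 𝔉 := fun i => by
    by_cases hxi : x ∈ ⋃₀ 𝒪 i
    · have hstar := (hdecide _ (isOpen_setStar (hopen i) {x}).isClosed_compl).resolve_left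
        (hsmall i hxi)
      exact mem_of_superset (compl_compl (SetStar {x} (𝒪 i)) ▸ hstar) fun y hy _ => hy
    · exact univ_mem' fun y hy => absurd hy hxi
  obtain ⟨y, hyS, hyS₀⟩ := Filter.nonempty_of_mem (inter_mem (hcomplete S hS) hS₀)
  obtain ⟨i, hxi, hyi⟩ := hdiag x y fun hxy => hxS₀ (hxy ▸ hyS₀)
  exact hyi (mem_iInter.1 hyS i hxi)

theorem Filter.ker_nonempty_of_quasiGDiagonal [CountablyCompactSpace X]
    (hopen : ∀ i, ∀ O ∈ 𝒪 i, IsOpen O)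
    (hdiag : ∀ x y : X, x ≠ y → ∃ i, x ∈ ⋃₀ 𝒪 i ∧ y ∉ SetStar {x} (𝒪 i))
    [𝔉.NeBot] (hcomplete : ∀ S : ι → Set X, (∀ i, S i ∈ 𝔉) → ⋂ i, S i ∈ 𝔉)
    (hdecide : ∀ C, IsClosed C → C ∈ 𝔉 ∨ Cᶜ ∈ 𝔉)
    (hbase : ∀ S ∈ 𝔉, ∃ C ∈ 𝔉, IsClosed C ∧ C ⊆ S) : 𝔉.ker.Nonempty := by
  obtain ⟨x, hx⟩ := Filter.nonempty_of_mem (hcomplete _ fun i =>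
    compl_setOf_compl_setStar_mem (hopen i) hdecide hbase)
  by_contra hker
  obtain ⟨i, hi⟩ := exists_compl_setStar_mem hopen hdiag hcomplete hdecide
    (fun hxker => hker ⟨x, hxker⟩)
  exact mem_iInter.1 hx i hi

end QuasiDiagonal

/-- Every initially `κ`-compact space with a quasi-`G_κ`-diagonal sequence is compact. -/
theorem initiallyCompact_quasiGDiagonalSeq_compact {X : Type u} [TopologicalSpace X]
    (κ : Cardinal.{u}) (hκ : ℵ₀ ≤ κ) (hX : InitiallyCompact X κ)
    (𝒪 : κ.ord.ToType → Set (Set X)) (h𝒪 : IsQuasiGDiagonalSeq κ 𝒪) :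
    CompactSpace X := by
  refine isCompact_univ_iff.1 fun f _ _ => ?_
  obtain ⟨ℱ, hfℱ, hcl, hfip, hmax⟩ := exists_maximal_closed_fip (ℱ₀ := {C | IsClosed C ∧ C ∈ f})
    (fun C hC => hC.1) fun u hu hfin => nonempty_of_mem ((sInter_mem hfin).2 fun C hC => (hu hC).2)
  have := kappaGenerate_neBot (hκ := hκ) hX hcl hfip
  have := hX.countablyCompactSpace hκ
  obtain ⟨x, hx⟩ := ker_nonempty_of_quasiGDiagonal (𝔉 := kappaGenerate κ hκ ℱ) h𝒪.1 h𝒪.2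
    (fun S hS => iInter_mem_kappaGenerate (by simp) hS)
    (fun C => mem_or_compl_mem_kappaGenerate hmax)
    (fun S => exists_isClosed_subset_of_mem_kappaGenerate hcl)
  refine ⟨x, mem_univ x, clusterPt_iff_forall_mem_closure.2 fun S hS => ?_⟩
  exact mem_ker.1 hx _ <| mem_kappaGenerate_of_mem <|
    hfℱ ⟨isClosed_closure, mem_of_superset hS subset_closure⟩
end

section
/- Let κ be an infinite cardinal and let G be a topological group. If G is initially κ-compact and every singleton {x} ⊆ G is the intersection of at most κ-many open subsets of G (that is, the pseudocharacter ψ(G) is at most κ), then G is compact. -/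
/-!
Let `𝒰` be at most `κ` open sets with `⋂ 𝒰 = {1}` and pick closed neighbourhoods `C U ⊆ U`
of `1`. If a neighbourhood `W` of `1` contained no finite intersection of the `C U`, initial
`κ`-compactness would give a point of `⋂ C U \ interior W`, which can only be `1`. Hence these
finite intersections, at most `κ` of them, form a base at `1`, and the right uniformity of `G`
has a base of cardinality at most `κ`. A Cauchy filter contains a small set for each basic
entourage, and a common point of their closures is its limit, so `G` is complete. Being countably
compact, `G` is also totally bounded (a uniformly separated sequence has no cluster point), and a
complete totally bounded space is compact.
-/

open Set Cardinal

universe u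

universe v

open Filter Topology Uniformity

theorem Cardinal.mk_finset_le {α : Type u} {κ : Cardinal.{u}} (hκ : ℵ₀ ≤ κ) (hα : #α ≤ κ) :
    #(Finset α) ≤ κ := by
  rcases finite_or_infinite α with _ | _
  · exact mk_le_aleph0.trans hκ
  · rwa [mk_finset_of_infinite]

namespace InitiallyCompact

variable {X : Type u} [TopologicalSpace X] {κ : Cardinal.{u}}

theorem elim_finite_subcover (hX : InitiallyCompact X κ) {ι : Type v} (U : ι → Set X)
    (hUo : ∀ i, IsOpen (U i)) (hU : ⋃ i, U i = Set.univ) (hι : lift.{u} #ι ≤ lift.{v} κ) :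
    ∃ t : Finset ι, ⋃ i ∈ t, U i = Set.univ := by
  obtain ⟨F, hFU, hF, hFcover⟩ := hX (range U) (forall_mem_range.2 hUo) (by rwa [sUnion_range])
    (lift_le.1 (mk_range_le_lift.trans hι))
  rw [← image_univ] at hFU
  obtain ⟨t, -, ht, htcover⟩ :=
    (exists_subset_image_finite_and (p := fun F => ⋃₀ F = Set.univ)).1 ⟨F, hFU, hF, hFcover⟩
  refine ⟨ht.toFinset, ?_⟩
  rw [← htcover, sUnion_image]
  simp

theorem iInter_nonempty (hX : InitiallyCompact X κ) {ι : Type v} (A : ι → Set X)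
    (hA : ∀ i, IsClosed (A i)) (hι : lift.{u} #ι ≤ lift.{v} κ)
    (hfip : ∀ t : Finset ι, (⋂ i ∈ t, A i).Nonempty) : (⋂ i, A i).Nonempty := by
  by_contra hempty
  obtain ⟨t, ht⟩ := hX.elim_finite_subcover (fun i => (A i)ᶜ) (fun i => (hA i).isOpen_compl)
    (by simpa [← compl_iInter, nonempty_iff_ne_empty] using hempty) hι
  obtain ⟨x, hx⟩ := hfip t
  obtain ⟨i, hi, hxi⟩ := mem_iUnion₂.1 (ht ▸ mem_univ x)
  exact hxi (mem_iInter₂.1 hx i hi)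

theorem exists_forall_mem_closure (hX : InitiallyCompact X κ) {ι : Type v} {f : Filter X}
    [f.NeBot] (s : ι → Set X) (hs : ∀ i, s i ∈ f) (hι : lift.{u} #ι ≤ lift.{v} κ) :
    ∃ z, ∀ i, z ∈ closure (s i) := by
  obtain ⟨z, hz⟩ := hX.iInter_nonempty (fun i => closure (s i)) (fun _ => isClosed_closure) hι
    fun t => (Filter.nonempty_of_mem ((biInter_finset_mem t).2 fun i _ => hs i)).mono
      (iInter₂_mono fun _ _ => subset_closure)
  exact ⟨z, mem_iInter.1 hz⟩

theorem exists_mapClusterPt (hX : InitiallyCompact X κ) (hκ : ℵ₀ ≤ κ) (u : ℕ → X) :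
    ∃ z, MapClusterPt z atTop u := by
  simp_rw [mapClusterPt_atTop_iff_forall_mem_closure]
  exact hX.exists_forall_mem_closure (f := map u atTop) _
    (fun n => image_mem_map (Ici_mem_atTop n)) (by simpa using hκ)

theorem exists_hasBasis_nhds [RegularSpace X] (hX : InitiallyCompact X κ) (hκ : ℵ₀ ≤ κ)
    {x : X} {𝒰 : Set (Set X)} (h𝒰 : ∀ U ∈ 𝒰, U ∈ 𝓝 x) (hcard : #𝒰 ≤ κ) (hx : ⋂₀ 𝒰 = {x}) :
    ∃ s : Finset 𝒰 → Set X, (𝓝 x).HasBasis (fun _ => True) s := by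
  choose C hCx hCc hCU using fun U : 𝒰 => exists_mem_nhds_isClosed_subset (h𝒰 U U.2)
  refine ⟨fun t => ⋂ U ∈ t, C U, ⟨fun W => ⟨fun hW => ?_, fun ⟨t, _, ht⟩ =>
    mem_of_superset ((biInter_finset_mem t).2 fun U _ => hCx U) ht⟩⟩⟩
  by_contra! hsmall
  let A : Option 𝒰 → Set X := fun o => o.elim (interior W)ᶜ C
  obtain ⟨z, hz⟩ := hX.iInter_nonempty A
    (fun o => o.rec isOpen_interior.isClosed_compl hCc)
    (by simpa using add_le_of_le hκ hcard (one_le_aleph0.trans hκ))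
    (fun t => by
      obtain ⟨y, hyC, hyW⟩ := not_subset.1 (hsmall t.eraseNone trivial)
      refine ⟨y, mem_iInter₂.2 fun o ho => ?_⟩
      cases o with
      | none => exact fun hy => hyW (interior_subset hy)
      | some U => exact mem_iInter₂.1 hyC U (Finset.mem_eraseNone.2 ho))
  have hzx : z ∈ ⋂₀ 𝒰 := fun U hU => hCU ⟨U, hU⟩ (mem_iInter.1 hz (some ⟨U, hU⟩))
  rw [hx, mem_singleton_iff] at hzx
  exact mem_iInter.1 hz none (hzx ▸ mem_interior_iff_mem_nhds.2 hW)

end InitiallyCompact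

section UniformSpace

variable {X : Type u} [UniformSpace X]

theorem totallyBounded_univ_of_forall_exists_mapClusterPt
    (h : ∀ u : ℕ → X, ∃ z, MapClusterPt z atTop u) : TotallyBounded (Set.univ : Set X) := by
  intro d hd
  obtain ⟨e, he, hed⟩ := comp_mem_uniformity_sets hd
  by_contra! hspread
  obtain ⟨u, -, hu⟩ := exists_seq_of_forall_finset_exists (fun _ => True)
    (fun a b => (b, a) ∉ d) fun t _ => by
      obtain ⟨y, -, hy⟩ := not_subset.1 (hspread t t.finite_toSet)
      exact ⟨y, trivial, fun a ha hya => hy (mem_biUnion ha hya)⟩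
  obtain ⟨z, hz⟩ := h u
  have hnear := hz.frequently (inter_mem (mem_nhds_left z he) (mem_nhds_right z he))
  obtain ⟨m, -, hm, -⟩ := hnear.forall_exists_of_atTop 0
  obtain ⟨n, hmn, -, hn⟩ := hnear.forall_exists_of_atTop (m + 1)
  exact hu m n hmn (hed (SetRel.prodMk_mem_comp hn hm))

theorem InitiallyCompact.completeSpace {κ : Cardinal.{u}} (hX : InitiallyCompact X κ)
    {ι : Type u} {p : ι → Prop} {s : ι → SetRel X X} (h : (𝓤 X).HasBasis p s)
    (hp : #{i // p i} ≤ κ) : CompleteSpace X := by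
  refine ⟨fun {f} hf => ?_⟩
  have : f.NeBot := hf.1
  choose t htf hts using fun i : {i // p i} => (cauchy_iff.1 hf).2 _ (h.mem_of_mem i.2)
  obtain ⟨z, hz⟩ := hX.exists_forall_mem_closure t htf (by simpa using hp)
  refine ⟨z, le_nhds_of_cauchy_adhp_aux fun r hr => ?_⟩
  obtain ⟨i, hi, hir⟩ := h.mem_iff.1 hr
  obtain ⟨y, hzy, hy⟩ := mem_closure_iff_nhds.1 (hz ⟨i, hi⟩) _ (mem_nhds_left z hr)
  exact ⟨t ⟨i, hi⟩, htf _, (hts _).trans hir, y, hzy, hy⟩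

end UniformSpace

/-- An initially `κ`-compact topological group in which every singleton is the
intersection of at most `κ`-many open sets (pseudocharacter at most `κ`) is compact. -/
theorem initiallyCompact_topologicalGroup_compact {G : Type u} [Group G] [TopologicalSpace G]
    [IsTopologicalGroup G] (κ : Cardinal.{u}) (hκ : ℵ₀ ≤ κ) (hG : InitiallyCompact G κ)
    (hψ : ∀ x : G, ∃ 𝒰 : Set (Set G), (∀ U ∈ 𝒰, IsOpen U) ∧ #𝒰 ≤ κ ∧ ⋂₀ 𝒰 = {x}) :
    CompactSpace G := by
  let _ : UniformSpace G := IsTopologicalGroup.rightUniformSpace G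
  obtain ⟨𝒰, h𝒰, hcard, hinter⟩ := hψ 1
  have h1 : (1 : G) ∈ ⋂₀ 𝒰 := hinter ▸ mem_singleton 1
  obtain ⟨s, hs⟩ :=
    hG.exists_hasBasis_nhds hκ (fun U hU => (h𝒰 U hU).mem_nhds (h1 U hU)) hcard hinter
  have : CompleteSpace G := hG.completeSpace (hs.comap fun p : G × G => p.2 * p.1⁻¹)
    ((mk_subtype_le _).trans (Cardinal.mk_finset_le hκ (by simpa using hcard)))
  have htb := totallyBounded_univ_of_forall_exists_mapClusterPt (hG.exists_mapClusterPt hκ)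
  exact ⟨isCompact_iff_totallyBounded_isComplete.2 ⟨htb, isComplete_univ⟩⟩
end
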